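/- arXiv:2506.20012 — 2 statements merged into one kernel-verified Lean document; each statement's English description precedes it below -/
import Mathlib

section
/- Let Ψ_N ∈ H¹(ℝ^{Nd}) with |Ψ_N|² = ρ_N a probability density, and for n < N define the marginal density ρ_{N,n}(x₁ⁿ) = ∫ ρ_N(x₁ⁿ, x_{n+1}^N) dx_{n+1}^N and the marginal osmotic velocity u_{N,n}(x₁ⁿ) = (1/ρ_{N,n}) ∫ [u_N]₁ⁿ ρ_N dx_{n+1}^N, where u_N = ∇ρ_N/(2ρ_N). Then ∫ |u_{N,n}|² ρ_{N,n} dx₁ⁿ ≤ ∫ |∇Ψ_N|² dx^N. -/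
/-!
Since `∇ρ = 2 Re ⟨Ψ, ∇Ψ⟩`, Cauchy–Schwarz gives the pointwise bound `|u_N|² ρ_N ≤ |∇Ψ|²`.
Averaging over the last `N - n` particles only decreases the energy: on each fibre,
`|∫ ρ_N u dz|² ≤ (∫ ρ_N dz) (∫ ρ_N |u|² dz)`, which is Cauchy–Schwarz for the weight `ρ_N`,
and integrating over the first `n` particles (Fubini) gives the claim.
-/

open MeasureTheory

noncomputable section

section OsmoticVelocity

variable {E F : Type*} [NormedAddCommGroup E] [NormedSpace ℝ E] [NormedAddCommGroup F]
  [InnerProductSpace ℝ F] {f : E → F} {x : E}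

theorem sq_fderiv_norm_sq_apply_le (hf : DifferentiableAt ℝ f x) (v : E) :
    (fderiv ℝ (fun x => ‖f x‖ ^ 2) x v) ^ 2 ≤ 4 * ‖f x‖ ^ 2 * ‖fderiv ℝ f x v‖ ^ 2 := by
  have hderiv : fderiv ℝ (fun x => ‖f x‖ ^ 2) x v = 2 * inner ℝ (f x) (fderiv ℝ f x v) := by
    rw [hf.hasFDerivAt.norm_sq.fderiv]
    simp [two_smul, two_mul]
  calc (fderiv ℝ (fun x => ‖f x‖ ^ 2) x v) ^ 2 = 4 * |inner ℝ (f x) (fderiv ℝ f x v)| ^ 2 := by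
        rw [hderiv, sq_abs]; ring
    _ ≤ 4 * (‖f x‖ * ‖fderiv ℝ f x v‖) ^ 2 := by gcongr; exact abs_real_inner_le_norm _ _
    _ = 4 * ‖f x‖ ^ 2 * ‖fderiv ℝ f x v‖ ^ 2 := by ring

theorem sq_osmotic_mul_norm_sq_le (hf : DifferentiableAt ℝ f x) (v : E) :
    (if ‖f x‖ ^ 2 = 0 then 0 else fderiv ℝ (fun x => ‖f x‖ ^ 2) x v / (2 * ‖f x‖ ^ 2)) ^ 2
      * ‖f x‖ ^ 2 ≤ ‖fderiv ℝ f x v‖ ^ 2 := by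
  split_ifs with h0
  · simp
  have hpos : 0 < ‖f x‖ ^ 2 := (sq_nonneg _).lt_of_ne' h0
  have hle := sq_fderiv_norm_sq_apply_le hf v
  rw [div_pow, mul_pow, div_mul_eq_mul_div, div_le_iff₀ (by positivity)]
  nlinarith

end OsmoticVelocity

section WeightedCauchySchwarz

variable {Z : Type*} [MeasurableSpace Z] {μ : Measure Z}

theorem sq_integral_mul_le_integral_mul_integral_mul_sq {w g : Z → ℝ} (hw : 0 ≤ w)
    (hwi : Integrable w μ) (hg : AEStronglyMeasurable g μ)
    (hwg : Integrable (fun z => w z * g z ^ 2) μ) :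
    (∫ z, w z * g z ∂μ) ^ 2 ≤ (∫ z, w z ∂μ) * ∫ z, w z * g z ^ 2 ∂μ := by
  have hwg₁ : Integrable (fun z => w z * g z) μ := by
    refine Integrable.mono' (g := fun z => (w z + w z * g z ^ 2) / 2)
      ((hwi.add hwg).div_const 2) (hwi.1.mul hg) (ae_of_all _ fun z => ?_)
    have hwz : 0 ≤ w z := hw z
    rw [Real.norm_eq_abs, abs_mul, abs_of_nonneg hwz, ← sq_abs (g z)]
    nlinarith [mul_nonneg hwz (sq_nonneg (|g z| - 1))]
  have hquad : ∀ t : ℝ, 0 ≤ (∫ z, w z ∂μ) * (t * t) + (-2 * ∫ z, w z * g z ∂μ) * t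
      + ∫ z, w z * g z ^ 2 ∂μ := by
    intro t
    have hexp : (fun z => w z * (t - g z) ^ 2)
        = fun z => t ^ 2 * w z - 2 * t * (w z * g z) + w z * g z ^ 2 := by
      funext z; ring
    calc 0 ≤ ∫ z, w z * (t - g z) ^ 2 ∂μ :=
          integral_nonneg fun z => mul_nonneg (hw z) (sq_nonneg _)
      _ = _ := by
        rw [hexp, integral_add (f := fun z => t ^ 2 * w z - 2 * t * (w z * g z))
            ((hwi.const_mul _).sub (hwg₁.const_mul _)) hwg,
          integral_sub (hwi.const_mul _) (hwg₁.const_mul _), integral_const_mul,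
          integral_const_mul]
        ring
  have hdisc := discrim_le_zero hquad
  rw [discrim] at hdisc
  linarith

variable {ι : Type*} [Fintype ι] {E : ι → Type*} [∀ i, NormedAddCommGroup (E i)]
  [∀ i, NormedSpace ℝ (E i)] [∀ i, CompleteSpace (E i)]

theorem norm_integral_apply_le (F : Z → ∀ i, E i) (i : ι) :
    ‖(∫ z, F z ∂μ) i‖ ≤ ∫ z, ‖F z i‖ ∂μ := by
  by_cases hF : Integrable F μ
  · rw [← ContinuousLinearMap.proj_apply (R := ℝ) i (∫ z, F z ∂μ),
      ← ContinuousLinearMap.integral_comp_comm _ hF]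
    exact norm_integral_le_integral_norm _
  · rw [integral_undef hF, Pi.zero_apply, norm_zero]
    exact integral_nonneg fun z => norm_nonneg _

def weightedMean (μ : Measure Z) (w : Z → ℝ) (u : Z → ∀ i, E i) : ∀ i, E i :=
  if ∫ z, w z ∂μ = 0 then 0 else (∫ z, w z ∂μ)⁻¹ • ∫ z, w z • u z ∂μ

theorem sum_norm_weightedMean_sq_mul_le {w : Z → ℝ} {u : Z → ∀ i, E i} (hw : 0 ≤ w)
    (hu : AEStronglyMeasurable u μ)
    (hint : Integrable (fun z => (∑ i, ‖u z i‖ ^ 2) * w z) μ) :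
    (∑ i, ‖weightedMean μ w u i‖ ^ 2) * ∫ z, w z ∂μ ≤ ∫ z, (∑ i, ‖u z i‖ ^ 2) * w z ∂μ := by
  set m := ∫ z, w z ∂μ with hm_def
  by_cases hm : m = 0
  · rw [hm, mul_zero]
    exact integral_nonneg fun z => mul_nonneg (by positivity) (hw z)
  have hwi : Integrable w μ := by
    by_contra h
    exact hm (integral_undef h)
  have hm_pos : 0 < m := (integral_nonneg hw).lt_of_ne' hm
  have hint_i : ∀ i, Integrable (fun z => w z * ‖u z i‖ ^ 2) μ := fun i =>
    hint.mono' (hwi.1.mul (((continuous_apply i).comp_aestronglyMeasurable hu).norm.pow 2))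
      (ae_of_all _ fun z => by
        rw [Real.norm_of_nonneg (mul_nonneg (hw z) (sq_nonneg _)), mul_comm]
        exact mul_le_mul_of_nonneg_right
          (Finset.single_le_sum (fun j _ => sq_nonneg ‖u z j‖) (Finset.mem_univ i)) (hw z))
  have hterm : ∀ i, ‖weightedMean μ w u i‖ ^ 2 * m ≤ ∫ z, w z * ‖u z i‖ ^ 2 ∂μ := by
    intro i
    have hmean : ‖weightedMean μ w u i‖ ≤ m⁻¹ * ∫ z, w z * ‖u z i‖ ∂μ := by
      rw [weightedMean, ← hm_def, if_neg hm, Pi.smul_apply, norm_smul,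
        Real.norm_of_nonneg (inv_nonneg.2 hm_pos.le)]
      refine mul_le_mul_of_nonneg_left ((norm_integral_apply_le _ i).trans_eq ?_)
        (inv_nonneg.2 hm_pos.le)
      simp only [Pi.smul_apply, norm_smul, Real.norm_of_nonneg (hw _)]
    have hcs := sq_integral_mul_le_integral_mul_integral_mul_sq hw hwi
      ((continuous_apply i).comp_aestronglyMeasurable hu).norm (hint_i i)
    calc ‖weightedMean μ w u i‖ ^ 2 * m
        ≤ (m⁻¹ * ∫ z, w z * ‖u z i‖ ∂μ) ^ 2 * m := by gcongr
      _ = (∫ z, w z * ‖u z i‖ ∂μ) ^ 2 / m := by field_simp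
      _ ≤ ∫ z, w z * ‖u z i‖ ^ 2 ∂μ := (div_le_iff₀' hm_pos).2 hcs
  calc (∑ i, ‖weightedMean μ w u i‖ ^ 2) * m
      = ∑ i, ‖weightedMean μ w u i‖ ^ 2 * m := Finset.sum_mul _ _ _
    _ ≤ ∑ i, ∫ z, w z * ‖u z i‖ ^ 2 ∂μ := Finset.sum_le_sum fun i _ => hterm i
    _ = ∫ z, (∑ i, ‖u z i‖ ^ 2) * w z ∂μ := by
      rw [← integral_finsetSum _ fun i _ => hint_i i]
      simp only [← Finset.mul_sum, mul_comm]

end WeightedCauchySchwarz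

section Marginal

variable {Y Z : Type*} [MeasurableSpace Y] [MeasurableSpace Z] {μ : Measure Y} {ν : Measure Z}
  [SFinite ν] {ι : Type*} [Fintype ι] {E : ι → Type*} [∀ i, NormedAddCommGroup (E i)]
  [∀ i, NormedSpace ℝ (E i)] [∀ i, CompleteSpace (E i)]

/-- With `Y` the first `n` particles, `marginal` is `ρ_{N,n}` and `marginalMean ν ρ u` is the
marginal osmotic velocity `u_{N,n}`. -/
def marginal (ν : Measure Z) (ρ : Y × Z → ℝ) (y : Y) : ℝ := ∫ z, ρ (y, z) ∂ν

def marginalMean (ν : Measure Z) (ρ : Y × Z → ℝ) (u : Y × Z → ∀ i, E i) (y : Y) : ∀ i, E i :=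
  weightedMean ν (fun z => ρ (y, z)) fun z => u (y, z)

theorem integral_sum_norm_marginalMean_sq_mul_le [SFinite μ] {ρ : Y × Z → ℝ}
    {u : Y × Z → ∀ i, E i} (hρ : 0 ≤ ρ) (hu : AEStronglyMeasurable u (μ.prod ν))
    (hint : Integrable (fun x => (∑ i, ‖u x i‖ ^ 2) * ρ x) (μ.prod ν)) :
    ∫ y, (∑ i, ‖marginalMean ν ρ u y i‖ ^ 2) * marginal ν ρ y ∂μ
      ≤ ∫ x, (∑ i, ‖u x i‖ ^ 2) * ρ x ∂(μ.prod ν) := by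
  rw [integral_prod _ hint]
  refine integral_mono_of_nonneg (ae_of_all _ fun y => ?_) hint.integral_prod_left ?_
  · exact mul_nonneg (by positivity) (integral_nonneg fun z => hρ _)
  filter_upwards [hu.prodMk_left, hint.prod_right_ae] with y hu_y hint_y
  exact sum_norm_weightedMean_sq_mul_le (fun z => hρ _) hu_y hint_y

end Marginal


theorem marginal_osmotic_energy_bound_general (d n m : ℕ)
    (Ψ : (Fin n → EuclideanSpace ℝ (Fin d)) × (Fin m → EuclideanSpace ℝ (Fin d)) → ℂ)
    (hΨdiff : Differentiable ℝ Ψ)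
    (ρN : (Fin n → EuclideanSpace ℝ (Fin d)) × (Fin m → EuclideanSpace ℝ (Fin d)) → ℝ)
    (hρN : ∀ x, ρN x = ‖Ψ x‖ ^ 2)
    (gradSq : (Fin n → EuclideanSpace ℝ (Fin d)) × (Fin m → EuclideanSpace ℝ (Fin d)) → ℝ)
    (hgradSq : ∀ x, gradSq x =
      (∑ i : Fin n, ∑ k : Fin d,
        ‖fderiv ℝ Ψ x (Pi.single i (EuclideanSpace.single k 1), 0)‖ ^ 2) +
      (∑ j : Fin m, ∑ k : Fin d,
        ‖fderiv ℝ Ψ x (0, Pi.single j (EuclideanSpace.single k 1))‖ ^ 2))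
    (hgradInt : Integrable gradSq volume)
    (uN : (Fin n → EuclideanSpace ℝ (Fin d)) × (Fin m → EuclideanSpace ℝ (Fin d)) →
      Fin n → EuclideanSpace ℝ (Fin d))
    (huN : ∀ x (i : Fin n) (k : Fin d), uN x i k =
      if ρN x = 0 then 0
      else fderiv ℝ ρN x (Pi.single i (EuclideanSpace.single k 1), 0) / (2 * ρN x))
    (ρmar : (Fin n → EuclideanSpace ℝ (Fin d)) → ℝ)
    (hρmar : ∀ y, ρmar y = ∫ z, ρN (y, z))
    (umar : (Fin n → EuclideanSpace ℝ (Fin d)) → Fin n → EuclideanSpace ℝ (Fin d))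
    (humar : ∀ y, umar y =
      if ρmar y = 0 then 0 else (ρmar y)⁻¹ • ∫ z, ρN (y, z) • uN (y, z)) :
    (∫ y, (∑ i : Fin n, ‖umar y i‖ ^ 2) * ρmar y) ≤ ∫ x, gradSq x := by
  obtain rfl : ρmar = marginal volume ρN := funext hρmar
  obtain rfl : umar = marginalMean volume ρN uN := funext humar
  obtain rfl : ρN = fun x => ‖Ψ x‖ ^ 2 := funext hρN
  have hΨ_cont : Continuous Ψ := hΨdiff.continuous
  have huN_meas : Measurable uN := by
    refine measurable_pi_lambda _ fun i => (MeasurableEquiv.toLp 2 (Fin d → ℝ)).measurable.comp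
      (measurable_pi_lambda _ fun k => ?_)
    simp_rw [huN]
    exact Measurable.ite (measurableSet_eq_fun (by fun_prop) measurable_const) measurable_const
      ((measurable_fderiv_apply_const ℝ _ _).div (by fun_prop))
  have h_energy_le : ∀ x, (∑ i, ‖uN x i‖ ^ 2) * ‖Ψ x‖ ^ 2 ≤ gradSq x := by
    intro x
    rw [hgradSq x, Finset.sum_mul]
    refine le_add_of_le_of_nonneg (Finset.sum_le_sum fun i _ => ?_) (by positivity)
    rw [EuclideanSpace.real_norm_sq_eq, Finset.sum_mul]
    refine Finset.sum_le_sum fun k _ => ?_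
    rw [huN]
    exact sq_osmotic_mul_norm_sq_le (hΨdiff x) _
  have h_energy_int : Integrable (fun x => (∑ i, ‖uN x i‖ ^ 2) * ‖Ψ x‖ ^ 2) :=
    hgradInt.mono' (by fun_prop) (ae_of_all _ fun x => by
      rw [Real.norm_of_nonneg (by positivity)]; exact h_energy_le x)
  calc _ ≤ ∫ x, (∑ i, ‖uN x i‖ ^ 2) * ‖Ψ x‖ ^ 2 ∂(volume.prod volume) :=
        integral_sum_norm_marginalMean_sq_mul_le (fun x => sq_nonneg _)
          huN_meas.aestronglyMeasurable h_energy_int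
    _ ≤ ∫ x, gradSq x := integral_mono h_energy_int hgradInt h_energy_le

/-- For an `N = n + m` particle wave function `Ψ ∈ H¹(ℝ^{Nd})`
with density `ρN = |Ψ|²`, osmotic velocity `uN = ∇ρN/(2ρN)`, marginal density
`ρmar(x₁ⁿ) = ∫ ρN dx_{n+1}^N` and marginal osmotic velocity
`umar = (1/ρmar) ∫ [uN]₁ⁿ ρN dx_{n+1}^N`, one has
`∫ |umar|² ρmar dx₁ⁿ ≤ ∫ |∇Ψ|² dx^N`. -/
theorem marginal_osmotic_energy_bound (d n m : ℕ)
    (Ψ : (Fin n → EuclideanSpace ℝ (Fin d)) × (Fin m → EuclideanSpace ℝ (Fin d)) → ℂ)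
    (hΨdiff : Differentiable ℝ Ψ)
    (hΨL2 : MemLp Ψ 2 volume)
    (ρN : (Fin n → EuclideanSpace ℝ (Fin d)) × (Fin m → EuclideanSpace ℝ (Fin d)) → ℝ)
    (hρN : ∀ x, ρN x = ‖Ψ x‖ ^ 2)
    (hprob : ∫ x, ρN x = 1)
    (gradSq : (Fin n → EuclideanSpace ℝ (Fin d)) × (Fin m → EuclideanSpace ℝ (Fin d)) → ℝ)
    (hgradSq : ∀ x, gradSq x =
      (∑ i : Fin n, ∑ k : Fin d,
        ‖fderiv ℝ Ψ x (Pi.single i (EuclideanSpace.single k 1), 0)‖ ^ 2) +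
      (∑ j : Fin m, ∑ k : Fin d,
        ‖fderiv ℝ Ψ x (0, Pi.single j (EuclideanSpace.single k 1))‖ ^ 2))
    (hgradInt : Integrable gradSq volume)
    (uN : (Fin n → EuclideanSpace ℝ (Fin d)) × (Fin m → EuclideanSpace ℝ (Fin d)) →
      Fin n → EuclideanSpace ℝ (Fin d))
    (huN : ∀ x (i : Fin n) (k : Fin d), uN x i k =
      if ρN x = 0 then 0
      else fderiv ℝ ρN x (Pi.single i (EuclideanSpace.single k 1), 0) / (2 * ρN x))
    (ρmar : (Fin n → EuclideanSpace ℝ (Fin d)) → ℝ)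
    (hρmar : ∀ y, ρmar y = ∫ z, ρN (y, z))
    (umar : (Fin n → EuclideanSpace ℝ (Fin d)) → Fin n → EuclideanSpace ℝ (Fin d))
    (humar : ∀ y, umar y =
      if ρmar y = 0 then 0 else (ρmar y)⁻¹ • ∫ z, ρN (y, z) • uN (y, z)) :
    (∫ y, (∑ i : Fin n, ‖umar y i‖ ^ 2) * ρmar y) ≤ ∫ x, gradSq x :=
  marginal_osmotic_energy_bound_general d n m Ψ hΨdiff ρN hρN gradSq hgradSq hgradInt uN huN ρmar
    hρmar umar humar
end
end

section
/- Let μ be a probability measure on C([0,T];ℝᵈ) (law of a continuous process X) with time marginals μ_t, and let 𝒟 : C([0,T];ℝᵈ) × [0,T] → ℝ be measurable with 𝔼∫₀ᵀ|𝒟(X,t)|²dt < ∞. Then there exists a measurable D : ℝᵈ × [0,T] → ℝ with ∫₀ᵀ∫|D(x,t)|²μ_t(dx)dt < ∞ such that for all bounded continuous f, ∫₀ᵀ∫D(x,t)f(x,t)μ_t(dx)dt = 𝔼∫₀ᵀ𝒟(X,t)f(X_t,t)dt, and moreover ∫₀ᵀ∫|D(x,t)|²μ_t(dx)dt ≤ 𝔼∫₀ᵀ|𝒟(X,t)|²dt,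 with equality iff 𝒟(·,t) = D(X_t,t) a.e. -/
/-!
Let `Ψ (t, ω) = (ω t, t)` and `g (t, ω) = 𝒟 ω t`. Under `dt ⊗ μ`, the conditional expectation
`𝔼[g | σ(Ψ)]` is `σ(Ψ)`-measurable, hence equal to `D ∘ Ψ` for a measurable `D` (Doob–Dynkin).
Pulling bounded `σ(Ψ)`-measurable factors out of the conditional expectation gives the identity
against test functions, and the same pull-out with the factor `𝔼[g | σ(Ψ)]` itself gives
`‖g - 𝔼[g | σ(Ψ)]‖₂² = ‖g‖₂² - ‖𝔼[g | σ(Ψ)]‖₂²`, whence the inequality and its equality case.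
-/

open MeasureTheory

noncomputable section

instance pathMeasurableSpace (d : ℕ) (T : ℝ) :
    MeasurableSpace C(Set.Icc (0:ℝ) T, EuclideanSpace ℝ (Fin d)) := borel _

def pathEval (d : ℕ) (T : ℝ) (hT : 0 ≤ T)
    (ω : C(Set.Icc (0:ℝ) T, EuclideanSpace ℝ (Fin d))) (t : ℝ) :
    EuclideanSpace ℝ (Fin d) :=
  ω (Set.projIcc 0 T hT t)

section CondExpL2

variable {Ω : Type*} {m mΩ : MeasurableSpace Ω} {μ : Measure Ω}

theorem integral_condExp_mul_of_stronglyMeasurable_right (hm : m ≤ mΩ)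
    [SigmaFinite (μ.trim hm)] {f g : Ω → ℝ} (hf : StronglyMeasurable[m] f)
    (hgf : Integrable (g * f) μ) (hg : Integrable g μ) :
    ∫ ω, μ[g|m] ω * f ω ∂μ = ∫ ω, g ω * f ω ∂μ :=
  calc ∫ ω, μ[g|m] ω * f ω ∂μ = ∫ ω, μ[g * f|m] ω ∂μ :=
        integral_congr_ae (condExp_mul_of_stronglyMeasurable_right hf hgf hg).symm
    _ = ∫ ω, g ω * f ω ∂μ := integral_condExp hm

variable [IsFiniteMeasure μ]

theorem integral_sq_sub_condExp (hm : m ≤ mΩ) {g : Ω → ℝ} (hg : MemLp g 2 μ) :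
    ∫ ω, (g ω - μ[g|m] ω) ^ 2 ∂μ = ∫ ω, g ω ^ 2 ∂μ - ∫ ω, μ[g|m] ω ^ 2 ∂μ := by
  have hg' : MemLp (μ[g|m]) 2 μ := hg.condExp one_le_two
  have hg2 : Integrable (fun ω => g ω ^ 2) μ := hg.integrable_sq
  have hg'2 : Integrable (fun ω => μ[g|m] ω ^ 2) μ := hg'.integrable_sq
  have hcross : Integrable (fun ω => 2 * (g ω * μ[g|m] ω)) μ :=
    (hg.integrable_mul hg').const_mul 2
  have hdiff : Integrable (fun ω => g ω ^ 2 - 2 * (g ω * μ[g|m] ω)) μ := hg2.sub hcross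
  have horth : ∫ ω, g ω * μ[g|m] ω ∂μ = ∫ ω, μ[g|m] ω ^ 2 ∂μ := by
    rw [← integral_condExp_mul_of_stronglyMeasurable_right hm stronglyMeasurable_condExp
      (hg.integrable_mul hg') (hg.integrable one_le_two)]
    simp only [sq]
  calc ∫ ω, (g ω - μ[g|m] ω) ^ 2 ∂μ
      = ∫ ω, (g ω ^ 2 - 2 * (g ω * μ[g|m] ω)) + μ[g|m] ω ^ 2 ∂μ := by
        congr 1; ext ω; ring
    _ = ∫ ω, g ω ^ 2 ∂μ - ∫ ω, μ[g|m] ω ^ 2 ∂μ := by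
        rw [integral_add hdiff hg'2, integral_sub hg2 hcross, integral_const_mul,
          horth]
        ring

theorem integral_sq_condExp_le (hm : m ≤ mΩ) {g : Ω → ℝ} (hg : MemLp g 2 μ) :
    ∫ ω, μ[g|m] ω ^ 2 ∂μ ≤ ∫ ω, g ω ^ 2 ∂μ := by
  have hnonneg : 0 ≤ ∫ ω, (g ω - μ[g|m] ω) ^ 2 ∂μ := integral_nonneg fun ω => sq_nonneg _
  rw [integral_sq_sub_condExp hm hg] at hnonneg
  linarith

theorem integral_sq_condExp_eq_iff (hm : m ≤ mΩ) {g : Ω → ℝ} (hg : MemLp g 2 μ) :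
    ∫ ω, μ[g|m] ω ^ 2 ∂μ = ∫ ω, g ω ^ 2 ∂μ ↔ g =ᵐ[μ] μ[g|m] := by
  have hsub : MemLp (fun ω => g ω - μ[g|m] ω) 2 μ := hg.sub (hg.condExp one_le_two)
  rw [eq_comm, ← sub_eq_zero, ← integral_sq_sub_condExp hm hg,
    integral_eq_zero_iff_of_nonneg (fun ω => sq_nonneg _) hsub.integrable_sq]
  refine Filter.eventually_congr (Filter.Eventually.of_forall fun ω => ?_)
  simp [sub_eq_zero]

end CondExpL2

theorem MemLp.exists_measurable_comp_projection {Ω β : Type*} [MeasurableSpace Ω]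
    [mβ : MeasurableSpace β] {ν : Measure Ω} [IsFiniteMeasure ν] {Ψ : Ω → β}
    (hΨ : Measurable Ψ) {g : Ω → ℝ} (hg : MemLp g 2 ν) :
    ∃ D : β → ℝ, Measurable D ∧ Integrable (fun ω => D (Ψ ω) ^ 2) ν ∧
      (∀ φ : β → ℝ, Measurable φ → (∃ C, ∀ b, |φ b| ≤ C) →
        ∫ ω, D (Ψ ω) * φ (Ψ ω) ∂ν = ∫ ω, g ω * φ (Ψ ω) ∂ν) ∧
      ∫ ω, D (Ψ ω) ^ 2 ∂ν ≤ ∫ ω, g ω ^ 2 ∂ν ∧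
      (∫ ω, D (Ψ ω) ^ 2 ∂ν = ∫ ω, g ω ^ 2 ∂ν ↔ ∀ᵐ ω ∂ν, g ω = D (Ψ ω)) := by
  have hm : mβ.comap Ψ ≤ ‹MeasurableSpace Ω› := hΨ.comap_le
  obtain ⟨D, hD, hDg⟩ := (stronglyMeasurable_condExp (m := mβ.comap Ψ) (f := g)
    (μ := ν)).measurable.exists_eq_measurable_comp
  have hDΨ : ∀ ω, D (Ψ ω) = ν[g|mβ.comap Ψ] ω := fun ω => (congrFun hDg ω).symm
  refine ⟨D, hD, ?_⟩
  simp only [hDΨ]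
  refine ⟨(hg.condExp one_le_two).integrable_sq, ?_, integral_sq_condExp_le hm hg,
    integral_sq_condExp_eq_iff hm hg⟩
  rintro φ hφ ⟨C, hC⟩
  have hφΨ : StronglyMeasurable[mβ.comap Ψ] (φ ∘ Ψ) :=
    (hφ.comp (comap_measurable Ψ)).stronglyMeasurable
  exact integral_condExp_mul_of_stronglyMeasurable_right hm hφΨ
    ((hg.integrable one_le_two).mul_bdd (hφ.comp hΨ).aestronglyMeasurable
      (Filter.Eventually.of_forall fun ω => (Real.norm_eq_abs _).trans_le (hC _)))
    (hg.integrable one_le_two)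

instance pathBorelSpace (d : ℕ) (T : ℝ) :
    BorelSpace C(Set.Icc (0:ℝ) T, EuclideanSpace ℝ (Fin d)) := ⟨rfl⟩

theorem continuous_pathEval_prod (d : ℕ) (T : ℝ) (hT : 0 ≤ T) :
    Continuous fun p : ℝ × C(Set.Icc (0:ℝ) T, EuclideanSpace ℝ (Fin d)) =>
      (pathEval d T hT p.2 p.1, p.1) :=
  (continuous_eval.comp <| continuous_snd.prodMk <|
    (continuous_projIcc (h := hT)).comp continuous_fst).prodMk continuous_fst

/-- Markovian projection.  For a probability measure `μ` on
`C([0,T];ℝᵈ)` and a measurable `𝒟` with `𝔼∫₀ᵀ|𝒟(X,t)|²dt < ∞`, there exists a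
measurable `D : ℝᵈ × [0,T] → ℝ`, square integrable against the time marginals,
such that `∫₀ᵀ∫ D f dμ_t dt = 𝔼∫₀ᵀ 𝒟(X,t) f(X_t,t) dt` for all bounded
continuous `f`, with `∫₀ᵀ∫|D|²dμ_t dt ≤ 𝔼∫₀ᵀ|𝒟|²dt`, and equality holds iff
`𝒟(·,t) = D(X_t,t)` a.e. -/
theorem markovian_projection (d : ℕ) (T : ℝ) (hT : 0 ≤ T)
    (μ : Measure C(Set.Icc (0:ℝ) T, EuclideanSpace ℝ (Fin d)))
    [IsProbabilityMeasure μ]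
    (𝒟 : C(Set.Icc (0:ℝ) T, EuclideanSpace ℝ (Fin d)) → ℝ → ℝ)
    (h𝒟meas : Measurable (Function.uncurry 𝒟))
    (h𝒟L2 : Integrable
      (fun p : ℝ × C(Set.Icc (0:ℝ) T, EuclideanSpace ℝ (Fin d)) => (𝒟 p.2 p.1) ^ 2)
      ((volume.restrict (Set.Ioc 0 T)).prod μ)) :
    ∃ D : EuclideanSpace ℝ (Fin d) → ℝ → ℝ,
      Measurable (Function.uncurry D) ∧
      Integrable
        (fun p : ℝ × C(Set.Icc (0:ℝ) T, EuclideanSpace ℝ (Fin d)) =>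
          (D (pathEval d T hT p.2 p.1) p.1) ^ 2)
        ((volume.restrict (Set.Ioc 0 T)).prod μ) ∧
      (∀ f : EuclideanSpace ℝ (Fin d) → ℝ → ℝ,
        Continuous (Function.uncurry f) → (∃ C, ∀ x t, |f x t| ≤ C) →
        (∫ p : ℝ × C(Set.Icc (0:ℝ) T, EuclideanSpace ℝ (Fin d)),
            D (pathEval d T hT p.2 p.1) p.1 * f (pathEval d T hT p.2 p.1) p.1
            ∂((volume.restrict (Set.Ioc 0 T)).prod μ))
          = ∫ p : ℝ × C(Set.Icc (0:ℝ) T, EuclideanSpace ℝ (Fin d)),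
              𝒟 p.2 p.1 * f (pathEval d T hT p.2 p.1) p.1
              ∂((volume.restrict (Set.Ioc 0 T)).prod μ)) ∧
      (∫ p : ℝ × C(Set.Icc (0:ℝ) T, EuclideanSpace ℝ (Fin d)),
          (D (pathEval d T hT p.2 p.1) p.1) ^ 2
          ∂((volume.restrict (Set.Ioc 0 T)).prod μ))
        ≤ ∫ p : ℝ × C(Set.Icc (0:ℝ) T, EuclideanSpace ℝ (Fin d)),
            (𝒟 p.2 p.1) ^ 2 ∂((volume.restrict (Set.Ioc 0 T)).prod μ) ∧
      ((∫ p : ℝ × C(Set.Icc (0:ℝ) T, EuclideanSpace ℝ (Fin d)),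
          (D (pathEval d T hT p.2 p.1) p.1) ^ 2
          ∂((volume.restrict (Set.Ioc 0 T)).prod μ))
        = (∫ p : ℝ × C(Set.Icc (0:ℝ) T, EuclideanSpace ℝ (Fin d)),
            (𝒟 p.2 p.1) ^ 2 ∂((volume.restrict (Set.Ioc 0 T)).prod μ))
        ↔ (∀ᵐ p ∂((volume.restrict (Set.Ioc 0 T)).prod μ),
            𝒟 p.2 p.1 = D (pathEval d T hT p.2 p.1) p.1)) := by
  have : IsFiniteMeasure (volume.restrict (Set.Ioc (0:ℝ) T)) := ⟨by simp⟩
  have hg : MemLp (fun p : ℝ × C(Set.Icc (0:ℝ) T, EuclideanSpace ℝ (Fin d)) => 𝒟 p.2 p.1) 2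
      ((volume.restrict (Set.Ioc 0 T)).prod μ) :=
    (memLp_two_iff_integrable_sq (h𝒟meas.comp measurable_swap).aestronglyMeasurable).2 h𝒟L2
  obtain ⟨D, hD, hD2, htest, hle, heq⟩ :=
    MemLp.exists_measurable_comp_projection (continuous_pathEval_prod d T hT).measurable hg
  exact ⟨Function.curry D, hD, hD2,
    fun f hf ⟨C, hC⟩ => htest (Function.uncurry f) hf.measurable ⟨C, fun b => hC b.1 b.2⟩,
    hle, heq⟩

end
end
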